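/- Marginal convergence estimate: let h̃₀ ∈ Γ^{h̄}(f,g) minimize ∬ c h over Γ^{h̄}(f,g), and for each ε > 0 let h_ε minimize Iᶜ_ε over {h : 0 ≤ h ≤ h̄}. Then ‖⟨h_ε⟩_x − f‖²_{L²} + ‖⟨h_ε⟩_y − g‖²_{L²} ≤ 2ε (∬ c h̃₀ − inf_{0 ≤ h ≤ h̄, supp h ⊆ supp h̄} ∬ c h); in particular if c ≥ 0 then ‖⟨h_ε⟩_x − f‖²_{L²} + ‖⟨h_ε⟩_y − g‖²_{L²} ≤ 2ε ∬ c h̃₀, so ⟨h_ε⟩_x → f and ⟨h_ε⟩_y → g in L² as ε ↓ 0. -/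
import Mathlib


open MeasureTheory Filter

/-- The relaxed (penalized) transport cost
`Iᶜ_ε(h) = ∬ c h + (1/(2ε))‖⟨h⟩ₓ − f‖²_{L²} + (1/(2ε))‖⟨h⟩_y − g‖²_{L²}`. -/
noncomputable def relaxedCost (m n : ℕ) (ε : ℝ)
    (c : (Fin m → ℝ) × (Fin n → ℝ) → ℝ)
    (f : (Fin m → ℝ) → ℝ) (g : (Fin n → ℝ) → ℝ)
    (h : (Fin m → ℝ) × (Fin n → ℝ) → ℝ) : ℝ :=
  (∫ p, c p * h p)
    + (1 / (2 * ε)) * (∫ x, ((∫ y, h (x, y)) - f x) ^ 2)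
    + (1 / (2 * ε)) * (∫ y, ((∫ x, h (x, y)) - g y) ^ 2)

/-- Marginal convergence estimate: if `h̃₀ ∈ Γ^{h̄}(f,g)` minimizes `∬ch`
over `Γ^{h̄}(f,g)` and for each `ε > 0` the function `H ε` minimizes `Iᶜ_ε` over
`{h : 0 ≤ h ≤ h̄}`, then
`‖⟨H ε⟩ₓ − f‖² + ‖⟨H ε⟩_y − g‖² ≤ 2ε(∬ch̃₀ − inf_{0≤h≤h̄} ∬ch)`; if moreover `c ≥ 0`
then the bound `2ε ∬ch̃₀` holds, and the marginals converge to `f, g` in `L²` as `ε ↓ 0`. -/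
theorem marginal_convergence_estimate (m n : ℕ)
    (hbar c : (Fin m → ℝ) × (Fin n → ℝ) → ℝ)
    (f : (Fin m → ℝ) → ℝ) (g : (Fin n → ℝ) → ℝ)
    (hbar_meas : Measurable hbar) (hbar_nonneg : ∀ p, 0 ≤ hbar p)
    (hbar_bdd : ∃ C, ∀ p, hbar p ≤ C) (hbar_supp : HasCompactSupport hbar)
    (f_meas : Measurable f) (f_nonneg : ∀ x, 0 ≤ f x)
    (f_int : Integrable f) (f_mass : ∫ x, f x = 1)
    (f_sq_int : Integrable (fun x => (f x) ^ 2))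
    (g_meas : Measurable g) (g_nonneg : ∀ y, 0 ≤ g y)
    (g_int : Integrable g) (g_mass : ∫ y, g y = 1)
    (g_sq_int : Integrable (fun y => (g y) ^ 2))
    (c_locint : LocallyIntegrable c)
    (h₀ : (Fin m → ℝ) × (Fin n → ℝ) → ℝ) (h₀_meas : Measurable h₀)
    (h₀_bds : ∀ᵐ p, 0 ≤ h₀ p ∧ h₀ p ≤ hbar p)
    (h₀_margx : ∀ᵐ x, (∫ y, h₀ (x, y)) = f x)
    (h₀_margy : ∀ᵐ y, (∫ x, h₀ (x, y)) = g y)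
    (h₀_min : ∀ h : (Fin m → ℝ) × (Fin n → ℝ) → ℝ, Measurable h →
      (∀ᵐ p, 0 ≤ h p ∧ h p ≤ hbar p) →
      (∀ᵐ x, (∫ y, h (x, y)) = f x) → (∀ᵐ y, (∫ x, h (x, y)) = g y) →
      (∫ p, c p * h₀ p) ≤ ∫ p, c p * h p)
    (H : ℝ → (Fin m → ℝ) × (Fin n → ℝ) → ℝ)
    (H_meas : ∀ ε > (0:ℝ), Measurable (H ε))
    (H_bds : ∀ ε > (0:ℝ), ∀ᵐ p, 0 ≤ H ε p ∧ H ε p ≤ hbar p)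
    (H_min : ∀ ε > (0:ℝ), ∀ h : (Fin m → ℝ) × (Fin n → ℝ) → ℝ, Measurable h →
      (∀ᵐ p, 0 ≤ h p ∧ h p ≤ hbar p) →
      relaxedCost m n ε c f g (H ε) ≤ relaxedCost m n ε c f g h) :
    (∀ ε > (0:ℝ),
      (∫ x, ((∫ y, H ε (x, y)) - f x) ^ 2) + (∫ y, ((∫ x, H ε (x, y)) - g y) ^ 2) ≤
        2 * ε * ((∫ p, c p * h₀ p) -
          sInf {r : ℝ | ∃ h : (Fin m → ℝ) × (Fin n → ℝ) → ℝ, Measurable h ∧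
            (∀ᵐ p, 0 ≤ h p ∧ h p ≤ hbar p) ∧ r = ∫ p, c p * h p})) ∧
    ((∀ p, 0 ≤ c p) →
      (∀ ε > (0:ℝ),
        (∫ x, ((∫ y, H ε (x, y)) - f x) ^ 2) + (∫ y, ((∫ x, H ε (x, y)) - g y) ^ 2) ≤
          2 * ε * ∫ p, c p * h₀ p) ∧
      Tendsto (fun ε : ℝ =>
          (∫ x, ((∫ y, H ε (x, y)) - f x) ^ 2) + (∫ y, ((∫ x, H ε (x, y)) - g y) ^ 2))
        (nhdsWithin 0 (Set.Ioi 0)) (nhds 0)) := by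
  classical
  obtain ⟨C, hC⟩ := hbar_bdd
  set K := tsupport hbar with hKdef
  have hKc : IsCompact K := hbar_supp
  have hKm : MeasurableSet K := (isClosed_tsupport hbar).measurableSet
  set D : (Fin m → ℝ) × (Fin n → ℝ) → ℝ := K.indicator (fun p => C * ‖c p‖) with hDdef
  have hD_int : Integrable D := by
    have h1 : IntegrableOn (fun p => C * ‖c p‖) K :=
      ((c_locint.integrableOn_isCompact hKc).norm.const_mul C)
    exact h1.integrable_indicator hKm
  have hdom : ∀ h : (Fin m → ℝ) × (Fin n → ℝ) → ℝ,
      (∀ᵐ p, 0 ≤ h p ∧ h p ≤ hbar p) → ∀ᵐ p, ‖c p * h p‖ ≤ D p := by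
    intro h hb
    filter_upwards [hb] with p hp
    rcases hp with ⟨hp0, hph⟩
    have h1 : ‖c p * h p‖ = ‖c p‖ * h p := by
      rw [norm_mul, Real.norm_eq_abs (h p), abs_of_nonneg hp0]
    rw [h1]
    by_cases hpK : p ∈ K
    · have : D p = C * ‖c p‖ := Set.indicator_of_mem hpK _
      rw [this]
      calc ‖c p‖ * h p ≤ ‖c p‖ * C :=
            mul_le_mul_of_nonneg_left (hph.trans (hC p)) (norm_nonneg _)
        _ = C * ‖c p‖ := mul_comm _ _
    · have hz : hbar p = 0 := image_eq_zero_of_notMem_tsupport hpK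
      have : D p = 0 := Set.indicator_of_notMem hpK _
      rw [this]
      have : h p = 0 := le_antisymm (hph.trans_eq hz) hp0
      simp [this]
  have hlow : ∀ h : (Fin m → ℝ) × (Fin n → ℝ) → ℝ,
      (∀ᵐ p, 0 ≤ h p ∧ h p ≤ hbar p) → -(∫ p, D p) ≤ ∫ p, c p * h p := by
    intro h hb
    have := norm_integral_le_of_norm_le hD_int (hdom h hb)
    have h2 := neg_abs_le (∫ p, c p * h p)
    rw [Real.norm_eq_abs] at this
    linarith
  set S := {r : ℝ | ∃ h : (Fin m → ℝ) × (Fin n → ℝ) → ℝ, Measurable h ∧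
      (∀ᵐ p, 0 ≤ h p ∧ h p ≤ hbar p) ∧ r = ∫ p, c p * h p} with hSdef
  have hSbdd : BddBelow S := by
    refine ⟨-(∫ p, D p), fun r hr => ?_⟩
    obtain ⟨h, _, hb, rfl⟩ := hr
    exact hlow h hb
  -- penalty terms vanish for h₀
  have pz1 : (∫ x, ((∫ y, h₀ (x, y)) - f x) ^ 2) = 0 := by
    have he : (fun x => ((∫ y, h₀ (x, y)) - f x) ^ 2) =ᵐ[volume] fun _ => (0:ℝ) := by
      filter_upwards [h₀_margx] with x hx
      simp [hx]
    rw [integral_congr_ae he, integral_zero]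
  have pz2 : (∫ y, ((∫ x, h₀ (x, y)) - g y) ^ 2) = 0 := by
    have he : (fun y => ((∫ x, h₀ (x, y)) - g y) ^ 2) =ᵐ[volume] fun _ => (0:ℝ) := by
      filter_upwards [h₀_margy] with y hy
      simp [hy]
    rw [integral_congr_ae he, integral_zero]
  -- main estimate
  have key : ∀ ε > (0:ℝ),
      (∫ x, ((∫ y, H ε (x, y)) - f x) ^ 2) + (∫ y, ((∫ x, H ε (x, y)) - g y) ^ 2) ≤
        2 * ε * ((∫ p, c p * h₀ p) - (∫ p, c p * H ε p)) := by
    intro ε hε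
    have h2e : (0:ℝ) < 2 * ε := by linarith
    have hmin := H_min ε hε h₀ h₀_meas h₀_bds
    rw [relaxedCost, relaxedCost, pz1, pz2] at hmin
    set A := ∫ x, ((∫ y, H ε (x, y)) - f x) ^ 2 with hA
    set B := ∫ y, ((∫ x, H ε (x, y)) - g y) ^ 2 with hB
    have h1 : (1 / (2 * ε)) * (A + B) ≤ (∫ p, c p * h₀ p) - (∫ p, c p * H ε p) := by
      rw [mul_add]; linarith
    have h2 := mul_le_mul_of_nonneg_left h1 h2e.le
    rw [← mul_assoc, mul_one_div_cancel h2e.ne', one_mul] at h2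
    exact h2
  constructor
  · intro ε hε
    have hmem : (∫ p, c p * H ε p) ∈ S := ⟨H ε, H_meas ε hε, H_bds ε hε, rfl⟩
    have hsle : sInf S ≤ ∫ p, c p * H ε p := csInf_le hSbdd hmem
    have h2e : (0:ℝ) ≤ 2 * ε := by linarith
    have := key ε hε
    have h3 : 2 * ε * ((∫ p, c p * h₀ p) - (∫ p, c p * H ε p)) ≤
        2 * ε * ((∫ p, c p * h₀ p) - sInf S) :=
      mul_le_mul_of_nonneg_left (by linarith) h2e
    linarith
  · intro hc
    have hcH : ∀ ε > (0:ℝ), (0:ℝ) ≤ ∫ p, c p * H ε p := by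
      intro ε hε
      refine integral_nonneg_of_ae ?_
      filter_upwards [H_bds ε hε] with p hp
      exact mul_nonneg (hc p) hp.1
    have bound : ∀ ε > (0:ℝ),
        (∫ x, ((∫ y, H ε (x, y)) - f x) ^ 2) + (∫ y, ((∫ x, H ε (x, y)) - g y) ^ 2) ≤
          2 * ε * ∫ p, c p * h₀ p := by
      intro ε hε
      have h2e : (0:ℝ) ≤ 2 * ε := by linarith
      have := key ε hε
      have h3 : 2 * ε * ((∫ p, c p * h₀ p) - (∫ p, c p * H ε p)) ≤
          2 * ε * ∫ p, c p * h₀ p :=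
        mul_le_mul_of_nonneg_left (by linarith [hcH ε hε]) h2e
      linarith
    refine ⟨bound, ?_⟩
    have hup : Filter.Tendsto (fun ε : ℝ => 2 * ε * ∫ p, c p * h₀ p)
        (nhdsWithin 0 (Set.Ioi 0)) (nhds 0) := by
      have h1 : Continuous (fun ε : ℝ => 2 * ε * ∫ p, c p * h₀ p) :=
        (continuous_const.mul continuous_id).mul continuous_const
      have h2 := h1.tendsto 0
      rw [show (2 : ℝ) * 0 * ∫ p, c p * h₀ p = 0 by ring] at h2
      exact h2.mono_left nhdsWithin_le_nhds
    refine tendsto_of_tendsto_of_tendsto_of_le_of_le' tendsto_const_nhds hup ?_ ?_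
    · filter_upwards [self_mem_nhdsWithin] with ε _
      have h1 : (0:ℝ) ≤ ∫ x, ((∫ y, H ε (x, y)) - f x) ^ 2 :=
        integral_nonneg fun x => sq_nonneg _
      have h2 : (0:ℝ) ≤ ∫ y, ((∫ x, H ε (x, y)) - g y) ^ 2 :=
        integral_nonneg fun y => sq_nonneg _
      linarith
    · filter_upwards [self_mem_nhdsWithin] with ε hε
      exact bound ε hε
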